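/- With A, c_k, B_k, J_k as defined, for any partition A = A₁ ⊔ A₂: if c_k ∈ A₁ then J_k ∩ (A₂ + A₂) = ∅, and if c_k ∈ A₂ then J_k ∩ (A₁ + A₁) = ∅. -/

import Mathlib

open Pointwise

def c (k : ℕ) : ℕ := 4 * 5 ^ (k - 1)
def B (k : ℕ) : Set ℕ := Set.Icc (5 * 5 ^ (k - 1)) (6 * 5 ^ (k - 1) - 1)
def F (k : ℕ) : Set ℕ := Set.Icc (10 * 5 ^ (k - 1) - 1) (15 * 5 ^ (k - 1))
def A : Set ℕ := Set.Icc 2 3 ∪ ⋃ k ∈ {k : ℕ | 1 ≤ k}, ({c k} ∪ B k ∪ F k)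

def J (k : ℕ) : Set ℕ := Set.Icc (9 * 5 ^ (k - 1)) (10 * 5 ^ (k - 1) - 1)

/-!
Write `m = 5^(k-1)`. If `x ≤ y` are in `A` and `x + y ∈ J k = [9m, 10m)`, then `y ∈ [4.5m, 10m)`,
where the only piece of `A` is `B k = [5m, 6m)`; so `x ∈ (3m, 5m)`, where `A` has only `c k = 4m`.
Hence the part of the partition that misses `c k` has no two elements summing into `J k`.
-/

theorem inter_add_self_eq_empty_of_rigid {α : Type*} [Add α] {S T U : Set α} {a : α}
    (hT : T ⊆ S) (ha : a ∉ T) (hrigid : ∀ x ∈ S, ∀ y ∈ S, x + y ∈ U → x = a ∨ y = a) :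
    U ∩ (T + T) = ∅ := by
  refine Set.eq_empty_of_forall_notMem fun z ⟨hzU, x, hx, y, hy, hxy⟩ => ?_
  subst hxy
  rcases hrigid x (hT hx) y (hT hy) hzU with rfl | rfl
  exacts [ha hx, ha hy]

theorem five_pow_le_or_five_mul_le (a b : ℕ) : 5 ^ a ≤ 5 ^ b ∨ 5 * 5 ^ b ≤ 5 ^ a := by
  rcases le_or_gt a b with h | h
  · exact Or.inl (Nat.pow_le_pow_right (by norm_num) h)
  · exact Or.inr (by simpa [pow_succ'] using Nat.pow_le_pow_right (show 0 < 5 by norm_num) h)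

theorem mem_A_cases {x : ℕ} (hx : x ∈ A) :
    (2 ≤ x ∧ x ≤ 3) ∨ ∃ n, x = 4 * 5 ^ n ∨ (5 * 5 ^ n ≤ x ∧ x < 6 * 5 ^ n) ∨
      (10 * 5 ^ n ≤ x + 1 ∧ x ≤ 15 * 5 ^ n) := by
  simp only [A, c, B, F, Set.mem_union, Set.mem_Icc, Set.mem_iUnion, Set.mem_ofPred_eq,
    Set.mem_singleton_iff, exists_prop] at hx
  rcases hx with hx | ⟨j, -, hx⟩
  · exact Or.inl hx
  · have : 1 ≤ 5 ^ (j - 1) := Nat.one_le_pow _ _ (by norm_num)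
    exact Or.inr ⟨j - 1, by omega⟩

theorem two_le_of_mem_A {x : ℕ} (hx : x ∈ A) : 2 ≤ x := by
  rcases mem_A_cases hx with hx | ⟨n, hx⟩
  · exact hx.1
  · have : 1 ≤ 5 ^ n := Nat.one_le_pow _ _ (by norm_num)
    omega

section Rigidity

variable {n x y : ℕ} (hx : x ∈ A) (hy : y ∈ A) (hxy : x ≤ y)
  (hlo : 9 * 5 ^ n ≤ x + y) (hhi : x + y < 10 * 5 ^ n)
include hx hy hxy hlo hhi

theorem large_summand_mem_B : 5 * 5 ^ n ≤ y ∧ y < 6 * 5 ^ n := by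
  have := two_le_of_mem_A hx
  rcases mem_A_cases hy with hy | ⟨j, hy⟩
  · omega
  · have := five_pow_le_or_five_mul_le j n
    have := five_pow_le_or_five_mul_le n j
    omega

theorem small_summand_eq_c : x = 4 * 5 ^ n := by
  have := large_summand_mem_B hx hy hxy hlo hhi
  rcases mem_A_cases hx with hx | ⟨j, hx⟩
  · omega
  · have := five_pow_le_or_five_mul_le j n
    have := five_pow_le_or_five_mul_le n j
    omega

end Rigidity

theorem eq_c_or_eq_c_of_add_mem_J (k : ℕ) :
    ∀ x ∈ A, ∀ y ∈ A, x + y ∈ J k → x = c k ∨ y = c k := by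
  intro x hx y hy h
  rw [J, Set.mem_Icc] at h
  have : 1 ≤ 5 ^ (k - 1) := Nat.one_le_pow _ _ (by norm_num)
  rcases le_total x y with hxy | hyx
  · exact Or.inl (small_summand_eq_c hx hy hxy h.1 (by omega))
  · exact Or.inr (small_summand_eq_c hy hx hyx (by omega) (by omega))

theorem stmt_14_general (A₁ A₂ : Set ℕ) (hunion : A₁ ∪ A₂ = A)
    (hdisj : Disjoint A₁ A₂) (k : ℕ) :
    (c k ∈ A₁ → J k ∩ (A₂ + A₂) = ∅) ∧
    (c k ∈ A₂ → J k ∩ (A₁ + A₁) = ∅) := by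
  exact ⟨fun hc => inter_add_self_eq_empty_of_rigid (hunion ▸ Set.subset_union_right)
      (Set.disjoint_left.mp hdisj hc) (eq_c_or_eq_c_of_add_mem_J k),
    fun hc => inter_add_self_eq_empty_of_rigid (hunion ▸ Set.subset_union_left)
      (Set.disjoint_right.mp hdisj hc) (eq_c_or_eq_c_of_add_mem_J k)⟩

theorem stmt_14 (A₁ A₂ : Set ℕ) (hunion : A₁ ∪ A₂ = A)
    (hdisj : Disjoint A₁ A₂) (k : ℕ) (hk : 1 ≤ k) :
    (c k ∈ A₁ → J k ∩ (A₂ + A₂) = ∅) ∧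
    (c k ∈ A₂ → J k ∩ (A₁ + A₁) = ∅) :=
  stmt_14_general A₁ A₂ hunion hdisj k
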